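/- arXiv:1909.02865 — 2 statements merged into one kernel-verified Lean document; each statement's English description precedes it below -/
import Mathlib

section
/- In the graph 𝒢 constructed for the connectivity lower-bound proof (with vertex copies A_L, A_U, B_L, B_U, C¹_L, C¹_U, C¹_crash, C², and the directed/undirected edge rules of the construction), every copy of a node u receives messages from at most one copy of each neighbor v of u in G; formally, for each edge uv of G and each copy u' of u, there is at most one copy v' of v such that there is an undirected edge u'v' or a directed edge from v' to u'. -/
/-- Copies of the vertices of `G` in the network 𝒢: two copies (`L` = `false`,
`U` = `true`) of each vertex of `A` and of `B`, three copies (`0` = L, `1` = U,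
`2` = crash) of each vertex of `C¹`, and one copy of each vertex of `C²`. -/
inductive Cpy {V : Type*} (A B C1 C2 : Finset V) : Type _
  | a (u : V) (hu : u ∈ A) (s : Bool)
  | b (u : V) (hu : u ∈ B) (s : Bool)
  | c1 (u : V) (hu : u ∈ C1) (s : Fin 3)
  | c2 (u : V) (hu : u ∈ C2)

/-- The original vertex a copy corresponds to. -/
def Cpy.proj {V : Type*} {A B C1 C2 : Finset V} : Cpy A B C1 C2 → V
  | .a u _ _ => u
  | .b u _ _ => u
  | .c1 u _ _ => u
  | .c2 u _ => u

/-- One orientation of the undirected edges of 𝒢: within `A`, `B`, `C¹`,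
copies of matching subscripts are joined (including crash copies for `C¹`);
within `C²` the original edges; for `u ∈ C¹, v ∈ C²` the edge `u_U v`;
for `u ∈ A ∪ B, v ∈ C¹` the edges `u_L v_L` and `u_U v_U`;
for `u ∈ A, v ∈ C²` the edge `u_L v`; for `u ∈ B, v ∈ C²` the edge `u_U v`. -/
def UEdge0 {V : Type*} (G : SimpleGraph V) {A B C1 C2 : Finset V} :
    Cpy A B C1 C2 → Cpy A B C1 C2 → Prop
  | .a u _ s, .a v _ t => G.Adj u v ∧ s = t
  | .b u _ s, .b v _ t => G.Adj u v ∧ s = t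
  | .c1 u _ s, .c1 v _ t => G.Adj u v ∧ s = t
  | .c2 u _, .c2 v _ => G.Adj u v
  | .c1 u _ s, .c2 v _ => G.Adj u v ∧ s = 1
  | .a u _ s, .c1 v _ t => G.Adj u v ∧ ((s = false ∧ t = 0) ∨ (s = true ∧ t = 1))
  | .b u _ s, .c1 v _ t => G.Adj u v ∧ ((s = false ∧ t = 0) ∨ (s = true ∧ t = 1))
  | .a u _ s, .c2 v _ => G.Adj u v ∧ s = false
  | .b u _ s, .c2 v _ => G.Adj u v ∧ s = true
  | _, _ => False

/-- The directed edges of 𝒢, `DEdge x y` meaning an edge directed from `x`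
to `y`: for `u ∈ C¹, v ∈ C²` the edge `v → u_L`; for `u ∈ A, v ∈ C²` the edge
`v → u_U`; for `u ∈ B, v ∈ C²` the edge `v → u_L`. -/
def DEdge {V : Type*} (G : SimpleGraph V) {A B C1 C2 : Finset V} :
    Cpy A B C1 C2 → Cpy A B C1 C2 → Prop
  | .c2 v _, .c1 u _ s => G.Adj v u ∧ s = 0
  | .c2 v _, .a u _ s => G.Adj v u ∧ s = true
  | .c2 v _, .b u _ s => G.Adj v u ∧ s = false
  | _, _ => False

/-- `x` receives messages from `y`: there is an undirected edge between them,
or a directed edge from `y` to `x`. -/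
def Recv {V : Type*} (G : SimpleGraph V) {A B C1 C2 : Finset V}
    (x y : Cpy A B C1 C2) : Prop :=
  UEdge0 G x y ∨ UEdge0 G y x ∨ DEdge G y x

/-! A receiver determines the subscript of each of its senders: within one part of the partition
the subscript of the sender is a function of the receiver's copy, and two copies of the same vertex
of `G` lie in the same part because the parts are disjoint. -/

namespace Cpy

variable {V : Type*} {A B C1 C2 : Finset V}

def part : Cpy A B C1 C2 → Fin 4
  | .a .. => 0
  | .b .. => 1
  | .c1 .. => 2
  | .c2 .. => 3

theorem part_eq_of_proj_eq (hAB : Disjoint A B) (hAC1 : Disjoint A C1) (hAC2 : Disjoint A C2)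
    (hBC1 : Disjoint B C1) (hBC2 : Disjoint B C2) (hC12 : Disjoint C1 C2)
    {x y : Cpy A B C1 C2} (h : x.proj = y.proj) : x.part = y.part := by
  cases x <;> cases y <;> simp only [proj] at h <;> subst h <;> first
    | rfl
    | (exfalso; solve_by_elim [Finset.disjoint_left.mp, Finset.disjoint_right.mp])

end Cpy

theorem Recv.eq_of_proj_eq_of_part_eq {V : Type*} {G : SimpleGraph V} {A B C1 C2 : Finset V}
    {x y z : Cpy A B C1 C2} (hy : Recv G x y) (hz : Recv G x z) (hproj : y.proj = z.proj)
    (hpart : y.part = z.part) : y = z := by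
  cases x <;> cases y <;> cases z <;>
    simp only [Recv, UEdge0, DEdge, Cpy.proj, Cpy.part, or_false, false_or] at hy hz hproj hpart <;>
    first
    | contradiction
    | (subst hproj; casesm* _ ∨ _, _ ∧ _ <;> simp_all)

theorem stmt7_general {V : Type*} (G : SimpleGraph V)
    (A B C1 C2 : Finset V)
    (hAB : Disjoint A B) (hAC1 : Disjoint A C1) (hAC2 : Disjoint A C2)
    (hBC1 : Disjoint B C1) (hBC2 : Disjoint B C2) (hC12 : Disjoint C1 C2)
    (u v : V) :
    ∀ u' v1 v2 : Cpy A B C1 C2, u'.proj = u → v1.proj = v → v2.proj = v →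
      Recv G u' v1 → Recv G u' v2 → v1 = v2 := by
  intro u' v1 v2 _ h1 h2 r1 r2
  have hproj : v1.proj = v2.proj := h1.trans h2.symm
  exact r1.eq_of_proj_eq_of_part_eq r2 hproj
    (Cpy.part_eq_of_proj_eq hAB hAC1 hAC2 hBC1 hBC2 hC12 hproj)

/-- Every copy of a node `u` receives messages from at most one copy of each
neighbor `v` of `u` in `G`. -/
theorem stmt7 {V : Type*} [Fintype V] [DecidableEq V] (G : SimpleGraph V)
    (A B C1 C2 : Finset V)
    (hAB : Disjoint A B) (hAC1 : Disjoint A C1) (hAC2 : Disjoint A C2)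
    (hBC1 : Disjoint B C1) (hBC2 : Disjoint B C2) (hC12 : Disjoint C1 C2)
    (hpart : A ∪ B ∪ C1 ∪ C2 = Finset.univ)
    (hA : A.Nonempty) (hB : B.Nonempty)
    (hcut : ∀ a ∈ A, ∀ b ∈ B, ¬ G.Adj a b)
    (u v : V) (huv : G.Adj u v) :
    ∀ u' v1 v2 : Cpy A B C1 C2, u'.proj = u → v1.proj = v → v2.proj = v →
      Recv G u' v1 → Recv G u' v2 → v1 = v2 :=
  stmt7_general G A B C1 C2 hAB hAC1 hAC2 hBC1 hBC2 hC12 u v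
end

section
/- In the graph 𝒢 of the connectivity proof, restricting to the undirected edges only, there is no path between A_L ∪ C¹_L ∪ B_L and C¹_crash; that is, the crash copies C¹_crash form a union of connected components disjoint from all other copies. -/
/-- The simple graph on the copies given by the undirected edges only. -/
def UGraph {V : Type*} (G : SimpleGraph V) (A B C1 C2 : Finset V) :
    SimpleGraph (Cpy A B C1 C2) :=
  SimpleGraph.fromRel (UEdge0 G)

/-- A copy is a crash copy if it is `c1 _ _ 2`. -/
def Cpy.isCrash {V : Type*} {A B C1 C2 : Finset V} : Cpy A B C1 C2 → Prop
  | .c1 _ _ s => s = 2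
  | _ => False

/-- A copy lies in `A_L ∪ C¹_L ∪ B_L` if it is `a _ _ false`, `b _ _ false`,
or `c1 _ _ 0`. -/
def Cpy.isLCopy {V : Type*} {A B C1 C2 : Finset V} : Cpy A B C1 C2 → Prop
  | .a _ _ s => s = false
  | .b _ _ s => s = false
  | .c1 _ _ s => s = 0
  | _ => False

theorem SimpleGraph.Reachable.of_forall_adj_imp {W : Type*} {G : SimpleGraph W} {P : W → Prop}
    (hP : ∀ u v, G.Adj u v → P u → P v) {x y : W} (h : G.Reachable x y) (hx : P x) : P y := by
  rw [reachable_iff_reflTransGen] at h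
  induction h with
  | refl => exact hx
  | tail _ hadj ih => exact hP _ _ hadj ih

section Crash

variable {V : Type*} {G : SimpleGraph V} {A B C1 C2 : Finset V}

-- An edge inside `C¹` joins copies on the same level; every other edge avoids level 2.
theorem Cpy.isCrash_iff_of_uEdge0 {x y : Cpy A B C1 C2} (h : UEdge0 G x y) :
    x.isCrash ↔ y.isCrash := by
  cases x <;> cases y <;> simp_all [UEdge0, Cpy.isCrash] <;> omega

theorem Cpy.isCrash_of_adj {x y : Cpy A B C1 C2} (h : (UGraph G A B C1 C2).Adj x y)
    (hx : x.isCrash) : y.isCrash := by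
  obtain ⟨-, hxy | hyx⟩ := h
  · exact (Cpy.isCrash_iff_of_uEdge0 hxy).1 hx
  · exact (Cpy.isCrash_iff_of_uEdge0 hyx).2 hx

theorem Cpy.isCrash_of_reachable {x y : Cpy A B C1 C2}
    (h : (UGraph G A B C1 C2).Reachable x y) (hx : x.isCrash) : y.isCrash :=
  h.of_forall_adj_imp (fun _ _ => Cpy.isCrash_of_adj) hx

theorem Cpy.not_isCrash_of_isLCopy {x : Cpy A B C1 C2} (hx : x.isLCopy) : ¬ x.isCrash := by
  cases x <;> simp_all [Cpy.isLCopy, Cpy.isCrash]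

end Crash

theorem stmt14_general {V : Type*} (G : SimpleGraph V)
    (A B C1 C2 : Finset V) :
    (∀ x y : Cpy A B C1 C2, x.isLCopy → y.isCrash →
        ¬ (UGraph G A B C1 C2).Reachable x y) ∧
    (∀ x y : Cpy A B C1 C2, x.isCrash →
        (UGraph G A B C1 C2).Reachable x y → y.isCrash) :=
  ⟨fun _ _ hx hy hxy => Cpy.not_isCrash_of_isLCopy hx (Cpy.isCrash_of_reachable hxy.symm hy),
    fun _ _ hx hxy => Cpy.isCrash_of_reachable hxy hx⟩

/-- Restricting 𝒢 to the undirected edges only, there is no path between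
`A_L ∪ C¹_L ∪ B_L` and `C¹_crash`; moreover, the crash copies form a union of
connected components disjoint from all other copies. -/
theorem stmt14 {V : Type*} [Fintype V] [DecidableEq V] (G : SimpleGraph V)
    (A B C1 C2 : Finset V)
    (hAB : Disjoint A B) (hAC1 : Disjoint A C1) (hAC2 : Disjoint A C2)
    (hBC1 : Disjoint B C1) (hBC2 : Disjoint B C2) (hC12 : Disjoint C1 C2)
    (hpart : A ∪ B ∪ C1 ∪ C2 = Finset.univ)
    (hA : A.Nonempty) (hB : B.Nonempty)
    (hcut : ∀ a ∈ A, ∀ b ∈ B, ¬ G.Adj a b) :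
    (∀ x y : Cpy A B C1 C2, x.isLCopy → y.isCrash →
        ¬ (UGraph G A B C1 C2).Reachable x y) ∧
    (∀ x y : Cpy A B C1 C2, x.isCrash →
        (UGraph G A B C1 C2).Reachable x y → y.isCrash) :=
  stmt14_general G A B C1 C2
end
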